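/- Let m ≥ 3, L < U, R = U - L, and X₁,…,Xₘ ∈ [L,U]. Define s² = (1/(m-1))∑(Xᵢ - X̄)², Z = (m/R²)·s², and Δₖ = (Xₖ - X̄₍ₖ₎)²/R² with X̄₍ₖ₎ the leave-one-out mean. Then ∑_{k=1}^m Δₖ² ≤ (m/(m-1))·Z. -/
import Mathlib


/-- Sum of squared influences: `∑ₖ Δₖ² ≤ (m/(m-1))·Z` where `Z = (m/R²)·s²`. -/
theorem sum_sq_influences_le (m : ℕ) (hm : 3 ≤ m) (L U : ℝ) (hLU : L < U)
    (X : Fin m → ℝ) (hX : ∀ i, X i ∈ Set.Icc L U) :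
    (∑ k : Fin m,
        ((X k - (∑ i ∈ Finset.univ.erase k, X i) / ((m : ℝ) - 1)) ^ 2 / (U - L) ^ 2) ^ 2)
      ≤ ((m : ℝ) / ((m : ℝ) - 1)) *
        (((m : ℝ) / (U - L) ^ 2) *
          ((∑ i, (X i - (∑ j, X j) / (m : ℝ)) ^ 2) / ((m : ℝ) - 1))) := by
  have hm3 : (3 : ℝ) ≤ (m : ℝ) := by exact_mod_cast hm
  have hm0 : (0 : ℝ) < (m : ℝ) := by linarith
  have hm1 : (0 : ℝ) < (m : ℝ) - 1 := by linarith
  have hR : (0 : ℝ) < U - L := sub_pos.mpr hLU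
  set R := U - L with hRdef
  set μ : ℝ := (∑ j, X j) / m with hμ
  have hident : ∀ k : Fin m,
      X k - (∑ i ∈ Finset.univ.erase k, X i) / ((m : ℝ) - 1)
        = ((m : ℝ) / ((m : ℝ) - 1)) * (X k - μ) := by
    intro k
    have hsum : ∑ i ∈ Finset.univ.erase k, X i = (∑ j, X j) - X k :=
      Finset.sum_erase_eq_sub (Finset.mem_univ k)
    rw [hsum, hμ]
    field_simp
    ring
  have hbound : ∀ k : Fin m, (X k - μ) ^ 2 ≤ (R * ((m : ℝ) - 1) / m) ^ 2 := by
    intro k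
    have h1 : (m : ℝ) * (X k - μ) = ∑ i ∈ Finset.univ.erase k, (X k - X i) := by
      rw [Finset.sum_sub_distrib, Finset.sum_const,
        Finset.sum_erase_eq_sub (Finset.mem_univ k),
        Finset.card_erase_of_mem (Finset.mem_univ k), Finset.card_univ, Fintype.card_fin,
        hμ]
      have : ((m - 1 : ℕ) : ℝ) = (m : ℝ) - 1 := by
        have : 1 ≤ m := by omega
        push_cast [this]; ring
      rw [nsmul_eq_mul, this]
      field_simp
      ring
    have h2 : |(m : ℝ) * (X k - μ)| ≤ ((m : ℝ) - 1) * R := by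
      rw [h1]
      calc |∑ i ∈ Finset.univ.erase k, (X k - X i)|
          ≤ ∑ i ∈ Finset.univ.erase k, |X k - X i| := Finset.abs_sum_le_sum_abs _ _
        _ ≤ ∑ _i ∈ Finset.univ.erase k, R := by
            apply Finset.sum_le_sum
            intro i _
            have h3 := hX k; have h4 := hX i
            simp only [Set.mem_Icc] at h3 h4
            rw [abs_le]
            constructor <;> [skip; skip] <;> simp only [hRdef] <;> linarith
        _ = ((m : ℝ) - 1) * R := by
            rw [Finset.sum_const, Finset.card_erase_of_mem (Finset.mem_univ k),
              Finset.card_univ, Fintype.card_fin, nsmul_eq_mul]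
            have : ((m - 1 : ℕ) : ℝ) = (m : ℝ) - 1 := by
              have : 1 ≤ m := by omega
              push_cast [this]; ring
            rw [this]
    have h5 : |X k - μ| ≤ R * ((m : ℝ) - 1) / m := by
      rw [abs_mul, abs_of_pos hm0] at h2
      rw [le_div_iff₀ hm0]
      linarith
    calc (X k - μ) ^ 2 = |X k - μ| ^ 2 := (sq_abs _).symm
      _ ≤ (R * ((m : ℝ) - 1) / m) ^ 2 := by
          apply pow_le_pow_left₀ (abs_nonneg _) h5
  calc (∑ k : Fin m,
        ((X k - (∑ i ∈ Finset.univ.erase k, X i) / ((m : ℝ) - 1)) ^ 2 / R ^ 2) ^ 2)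
      = ∑ k : Fin m, ((((m : ℝ) / ((m : ℝ) - 1)) * (X k - μ)) ^ 2 / R ^ 2) ^ 2 := by
        apply Finset.sum_congr rfl
        intro k _
        rw [hident k]
    _ ≤ ∑ k : Fin m, ((m : ℝ) / ((m : ℝ) - 1)) ^ 2 * (X k - μ) ^ 2 / R ^ 2 := by
        apply Finset.sum_le_sum
        intro k _
        have hb := hbound k
        have hR2 : (0 : ℝ) < R ^ 2 := by positivity
        have hc : ((m : ℝ) / ((m : ℝ) - 1)) ^ 2 * (R * ((m : ℝ) - 1) / m) ^ 2 = R ^ 2 := by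
          field_simp
        have key : ((m : ℝ) / ((m : ℝ) - 1)) ^ 2 * (X k - μ) ^ 2 ≤ R ^ 2 := by
          calc ((m : ℝ) / ((m : ℝ) - 1)) ^ 2 * (X k - μ) ^ 2
              ≤ ((m : ℝ) / ((m : ℝ) - 1)) ^ 2 * (R * ((m : ℝ) - 1) / m) ^ 2 :=
                mul_le_mul_of_nonneg_left hb (by positivity)
            _ = R ^ 2 := hc
        rw [div_pow, div_le_div_iff₀ (by positivity : (0:ℝ) < (R ^ 2) ^ 2) hR2]
        have he : (0:ℝ) ≤ ((m : ℝ) / ((m : ℝ) - 1)) ^ 2 * (X k - μ) ^ 2 := by positivity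
        nlinarith [key, he, sq_nonneg R, mul_nonneg he hR2.le]
    _ = ((m : ℝ) / ((m : ℝ) - 1)) *
        (((m : ℝ) / R ^ 2) * ((∑ i, (X i - μ) ^ 2) / ((m : ℝ) - 1))) := by
        rw [← Finset.sum_div, ← Finset.mul_sum]
        field_simp
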